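/- Consider a periodic switched matrix-weighted network on n nodes: let L^0, L^1, …, L^{m−1} (m ≥ 1) be matrix-valued Laplacians (each symmetric positive semidefinite with R ⊆ null(L^k)) with dwell times Δt_0, …, Δt_{m−1} > 0, and for k ∈ ℕ set L^k = L^{k mod m} and Δt_k = Δt_{k mod m}. Then the following are equivalent: (i) for every initial state x_0 ∈ ℝ^{dn}, the sequence defined by x_{k+1} = exp(−Δt_k L^k) x_k converges to the average consensus value x_f = 1_n ⊗ ((1/n) Σ_{i=1}^n (x_0)_i); (ii) the null space of the integral Laplacian over one period, Σ_{k=0}^{m−1} Δt_k L^k, equals R. -/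

import Mathlib

open Matrix Finset Filter

/-- The matrix-valued Laplacian of a matrix-weighted graph on `n` nodes with
state dimension `d`: the `(i,j)` off-diagonal block is `-A i j` and the `i`-th
diagonal block is `∑ k ≠ i, A i k`. -/
noncomputable def mwLaplacian {n d : ℕ} (A : Fin n → Fin n → Matrix (Fin d) (Fin d) ℝ) :
    Matrix (Fin n × Fin d) (Fin n × Fin d) ℝ :=
  fun p q =>
    if p.1 = q.1 then ∑ k ∈ Finset.univ.erase p.1, A p.1 k p.2 q.2
    else -(A p.1 q.1 p.2 q.2)

/-- Membership in the consensus subspace `R = range (1ₙ ⊗ I_d)`: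
all blocks of `x` are equal. -/
def isConsensus {n d : ℕ} (x : Fin n × Fin d → ℝ) : Prop :=
  ∃ v : Fin d → ℝ, ∀ p : Fin n × Fin d, x p = v p.2

/-- The Euclidean norm on `ι → ℝ`. -/
noncomputable def euclNorm {ι : Type*} [Fintype ι] (x : ι → ℝ) : ℝ :=
  Real.sqrt (x ⬝ᵥ x)

/-- The state of the switched system at switching instants:
`x_0 = x0`, `x_{k+1} = E k ⬝ x_k`. -/
noncomputable def stateSeq {ι : Type*} [Fintype ι] [DecidableEq ι]
    (E : ℕ → Matrix ι ι ℝ) (x0 : ι → ℝ) : ℕ → ι → ℝ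
  | 0 => x0
  | k + 1 => (E k).mulVec (stateSeq E x0 k)

/-!
Each step `exp (-Δt_k L^k)` is a symmetric contraction of Euclidean space which fixes the
consensus subspace `R` pointwise, hence maps `Rᗮ` to itself; in an eigenbasis of `L^k` it
multiplies the `i`-th coordinate by `exp (-Δt_k λ_i) ≤ 1`, so it preserves the norm of `x` only
when `L^k x = 0`. The product over one period therefore preserves the norm of `x` only when `x`
lies in the null space of every `L^k`, i.e. of the integral Laplacian; under (ii) such an `x` in
`Rᗮ` vanishes, and by compactness of the unit sphere of `Rᗮ` the period map has norm `ρ < 1`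
there. Since `x_0` minus its average lies in `Rᗮ` and the average is fixed, `x_k` converges to
the average at rate `ρ ^ (k / m)`. Conversely, a vector in the null space of the integral
Laplacian is killed by every `L^k` (all terms of `∑ Δt_k xᵀ L^k x = 0` are nonnegative), so its
trajectory is constant and must equal its average.
-/

open NormedSpace Topology WithLp

def transition {M : Type*} [Monoid M] (E : ℕ → M) : ℕ → M
  | 0 => 1
  | k + 1 => E k * transition E k

section Transition
variable {M : Type*} [Monoid M]

theorem transition_add (E : ℕ → M) (a j : ℕ) :
    transition E (a + j) = transition (fun k => E (a + k)) j * transition E a := by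
  induction j with
  | zero => simp [transition]
  | succ j ih => rw [← Nat.add_assoc, transition, ih, transition, mul_assoc]

theorem transition_mul_add_of_periodic {E : ℕ → M} {m : ℕ} (hE : ∀ k, E k = E (k % m))
    (q j : ℕ) : transition E (m * q + j) = transition E j * transition E m ^ q := by
  have hshift (q : ℕ) : (fun k => E (m * q + k)) = E := by
    funext k; rw [hE (m * q + k), Nat.mul_add_mod, ← hE]
  have hpow (q : ℕ) : transition E (m * q) = transition E m ^ q := by
    induction q with
    | zero => rw [Nat.mul_zero, pow_zero]; rfl
    | succ q ih => rw [Nat.mul_succ, transition_add, hshift, ih, pow_succ']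
  rw [transition_add, hshift, hpow]

end Transition

theorem ContinuousLinearMap.opNorm_lt_one_of_norm_apply_lt {E F : Type*}
    [NormedAddCommGroup E] [NormedSpace ℝ E] [NormedAddCommGroup F] [NormedSpace ℝ F]
    [FiniteDimensional ℝ E]
    (f : E →L[ℝ] F) (hf : ∀ x ≠ 0, ‖f x‖ < ‖x‖) : ‖f‖ < 1 := by
  rcases subsingleton_or_nontrivial E with _ | _
  · rw [Subsingleton.elim f 0, norm_zero]; exact one_pos
  obtain ⟨y, hy, hmax⟩ := (isCompact_sphere (0 : E) 1).exists_isMaxOn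
    (NormedSpace.sphere_nonempty.2 zero_le_one)
    (continuous_norm.comp f.continuous).continuousOn
  rw [mem_sphere_zero_iff_norm] at hy
  refine (f.opNorm_le_of_unit_norm (norm_nonneg _) fun x hx => ?_).trans_lt
    (hy ▸ hf y (ne_zero_of_norm_ne_zero (by rw [hy]; exact one_ne_zero)))
  exact hmax (mem_sphere_zero_iff_norm.2 hx)

section Nonexpansive
variable {E : Type*} [NormedAddCommGroup E] [NormedSpace ℝ E] {T : ℕ → E →L[ℝ] E}

theorem norm_transition_apply_le (hT : ∀ k x, ‖T k x‖ ≤ ‖x‖) (k : ℕ) (x : E) :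
    ‖transition T k x‖ ≤ ‖x‖ := by
  induction k with
  | zero => rfl
  | succ k ih => exact (hT k _).trans ih

theorem transition_apply_mem {W : Submodule ℝ E} (hW : ∀ k, ∀ x ∈ W, T k x ∈ W) (k : ℕ)
    {x : E} (hx : x ∈ W) : transition T k x ∈ W := by
  induction k with
  | zero => exact hx
  | succ k ih => exact hW k _ ih

theorem transition_apply_eq_self {k : ℕ} {x : E} (h : ∀ j < k, T j x = x) :
    transition T k x = x := by
  induction k with
  | zero => rfl
  | succ k ih =>
    change T k (transition T k x) = x
    rw [ih fun j hj => h j (Nat.lt_succ_of_lt hj), h k (Nat.lt_succ_self k)]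

theorem apply_eq_self_of_norm_transition_apply_eq (hT : ∀ k x, ‖T k x‖ ≤ ‖x‖)
    (hfix : ∀ k x, ‖T k x‖ = ‖x‖ → T k x = x) {k : ℕ} {x : E}
    (h : ‖transition T k x‖ = ‖x‖) : ∀ j < k, T j x = x := by
  induction k with
  | zero => simp
  | succ k ih =>
    have hk : ‖transition T k x‖ = ‖x‖ :=
      le_antisymm (norm_transition_apply_le hT k x) (h.symm.le.trans (hT k _))
    have hxk : transition T k x = x := transition_apply_eq_self (ih hk)
    change ‖T k (transition T k x)‖ = ‖x‖ at h
    rw [hxk] at h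
    intro j hj
    rcases Nat.lt_succ_iff_lt_or_eq.1 hj with hj | rfl
    · exact ih hk j hj
    · exact hfix j x h

theorem tendsto_transition_apply_nhds_zero [FiniteDimensional ℝ E] {m : ℕ} (hm : m ≠ 0)
    (hper : ∀ k, T k = T (k % m)) (hT : ∀ k x, ‖T k x‖ ≤ ‖x‖) {W : Submodule ℝ E}
    (hW : ∀ k, ∀ x ∈ W, T k x ∈ W) (hP : ∀ x ∈ W, x ≠ 0 → ‖transition T m x‖ < ‖x‖)
    {x : E} (hx : x ∈ W) : Tendsto (fun k => transition T k x) atTop (𝓝 0) := by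
  set P := transition T m
  obtain ⟨ρ, hρ0, hρ1, hPW⟩ : ∃ ρ, 0 ≤ ρ ∧ ρ < 1 ∧ ∀ y ∈ W, ‖P y‖ ≤ ρ * ‖y‖ :=
    ⟨_, norm_nonneg _, (P ∘L W.subtypeL).opNorm_lt_one_of_norm_apply_lt fun y hy =>
      hP y y.2 (by simpa using hy), fun y hy => (P ∘L W.subtypeL).le_opNorm ⟨y, hy⟩⟩
  have hPq (q : ℕ) : ‖(P ^ q) x‖ ≤ ρ ^ q * ‖x‖ := by
    induction q with
    | zero => simp
    | succ q ih =>
      have hmem := transition_apply_mem hW (m * q + 0) hx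
      rw [transition_mul_add_of_periodic hper, transition, one_mul] at hmem
      rw [pow_succ', mul_apply_eq_comp, pow_succ', mul_assoc]
      exact (hPW _ hmem).trans (mul_le_mul_of_nonneg_left ih hρ0)
  have hk (k : ℕ) : ‖transition T k x‖ ≤ ρ ^ (k / m) * ‖x‖ :=
    calc ‖transition T k x‖ = ‖transition T (k % m) ((P ^ (k / m)) x)‖ := by
          rw [← mul_apply_eq_comp, ← transition_mul_add_of_periodic hper,
            Nat.div_add_mod]
      _ ≤ ‖(P ^ (k / m)) x‖ := norm_transition_apply_le hT _ _
      _ ≤ ρ ^ (k / m) * ‖x‖ := hPq _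
  refine squeeze_zero_norm hk ?_
  simpa using ((tendsto_pow_atTop_nhds_zero_of_lt_one hρ0 hρ1).comp
    (Nat.tendsto_div_const_atTop hm)).mul_const ‖x‖

end Nonexpansive

section Spectral
variable {ι : Type*} [Fintype ι]

theorem Matrix.mulVec_eq_zero_of_sum_smul_posSemidef_mulVec_eq_zero {κ : Type*}
    {s : Finset κ} {A : κ → Matrix ι ι ℝ} {c : κ → ℝ} (hA : ∀ k ∈ s, (A k).PosSemidef)
    (hc : ∀ k ∈ s, 0 < c k) {x : ι → ℝ} (h : (∑ k ∈ s, c k • A k) *ᵥ x = 0) :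
    ∀ k ∈ s, A k *ᵥ x = 0 := by
  have hq : ∑ k ∈ s, c k * (x ⬝ᵥ A k *ᵥ x) = 0 := by
    simpa [sum_mulVec, dotProduct_sum, smul_mulVec, dotProduct_smul] using congrArg (x ⬝ᵥ ·) h
  intro k hk
  have hk0 := (Finset.sum_eq_zero_iff_of_nonneg fun j hj =>
    mul_nonneg (hc j hj).le (by simpa using (hA j hj).dotProduct_mulVec_nonneg x)).1 hq k hk
  exact ((hA k hk).dotProduct_mulVec_zero_iff x).1 (by simpa [(hc k hk).ne'] using hk0)

variable [DecidableEq ι]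

theorem Matrix.exp_mulVec_of_mulVec_eq_smul {A : Matrix ι ι ℝ} {v : ι → ℝ} {μ : ℝ}
    (hv : A *ᵥ v = μ • v) : exp A *ᵥ v = Real.exp μ • v := by
  -- any submultiplicative norm makes the exponential series summable; matrices have none globally
  let _ : NormedRing (Matrix ι ι ℝ) := Matrix.linftyOpNormedRing
  let _ : NormedAlgebra ℝ (Matrix ι ι ℝ) := Matrix.linftyOpNormedAlgebra
  have hpow (k : ℕ) : A ^ k *ᵥ v = μ ^ k • v := by
    induction k with
    | zero => simp
    | succ k ih => rw [pow_succ', ← mulVec_mulVec, ih, mulVec_smul, hv, smul_smul, pow_succ]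
  have hA := (exp_series_hasSum_exp' (𝕂 := ℝ) A).map (mulVec.addMonoidHomLeft v)
    (continuous_id.matrix_mulVec continuous_const)
  have hμ := (exp_series_hasSum_exp' (𝕂 := ℝ) μ).smul_const v
  rw [← Real.exp_eq_exp_ℝ] at hμ
  refine hA.unique (hμ.congr_fun fun k => ?_)
  change ((k.factorial : ℝ)⁻¹ • A ^ k) *ᵥ v = _
  rw [smul_mulVec, hpow, smul_smul, smul_eq_mul]

theorem Matrix.exp_neg_smul_mulVec_of_mulVec_eq_zero {L : Matrix ι ι ℝ} {x : ι → ℝ}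
    (t : ℝ) (hx : L *ᵥ x = 0) : exp (-(t • L)) *ᵥ x = x := by
  have hx0 : (-(t • L)) *ᵥ x = (0 : ℝ) • x := by rw [neg_mulVec, smul_mulVec, hx]; simp
  rw [exp_mulVec_of_mulVec_eq_smul hx0, Real.exp_zero, one_smul]

theorem Matrix.IsHermitian.repr_toEuclideanCLM {M : Matrix ι ι ℝ} (hM : M.IsHermitian)
    (b : OrthonormalBasis ι ℝ (EuclideanSpace ℝ ι)) {ν : ι → ℝ}
    (hb : ∀ i, M *ᵥ ⇑(b i) = ν i • ⇑(b i)) (x : EuclideanSpace ℝ ι) (i : ι) :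
    b.repr (toEuclideanCLM (𝕜 := ℝ) M x) i = ν i * b.repr x i := by
  have hbi : toEuclideanCLM (𝕜 := ℝ) M (b i) = ν i • b i := by
    ext j; simp [hb]
  rw [b.repr_apply_apply, b.repr_apply_apply, ← real_inner_smul_left, ← hbi]
  exact ((isSymmetric_toEuclideanLin_iff.mpr hM) (b i) x).symm

theorem Matrix.IsHermitian.exp_neg_smul {L : Matrix ι ι ℝ} (hL : L.IsHermitian) (t : ℝ) :
    (NormedSpace.exp (-(t • L))).IsHermitian :=
  (hL.smul (IsSelfAdjoint.all t)).neg.exp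

theorem Matrix.IsHermitian.repr_toEuclideanCLM_exp_neg_smul {L : Matrix ι ι ℝ}
    (hL : L.IsHermitian) (t : ℝ) (x : EuclideanSpace ℝ ι) (i : ι) :
    hL.eigenvectorBasis.repr (toEuclideanCLM (𝕜 := ℝ) (NormedSpace.exp (-(t • L))) x) i
      = Real.exp (-(t * hL.eigenvalues i)) * hL.eigenvectorBasis.repr x i := by
  refine (hL.exp_neg_smul t).repr_toEuclideanCLM _
    (ν := fun j => Real.exp (-(t * hL.eigenvalues j))) (fun j => ?_) x i
  refine exp_mulVec_of_mulVec_eq_smul ?_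
  rw [neg_mulVec, smul_mulVec, hL.mulVec_eigenvectorBasis, smul_smul, neg_smul]

section PosSemidef
variable {L : Matrix ι ι ℝ} {t : ℝ}

theorem Matrix.PosSemidef.exp_neg_mul_eigenvalues_le_one (hL : L.PosSemidef) (ht : 0 ≤ t)
    (i : ι) : Real.exp (-(t * hL.isHermitian.eigenvalues i)) ≤ 1 :=
  Real.exp_le_one_iff.2 (neg_nonpos.2 (mul_nonneg ht (hL.eigenvalues_nonneg i)))

theorem Matrix.PosSemidef.norm_toEuclideanCLM_exp_neg_smul_le (hL : L.PosSemidef) (ht : 0 ≤ t)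
    (x : EuclideanSpace ℝ ι) : ‖toEuclideanCLM (𝕜 := ℝ) (exp (-(t • L))) x‖ ≤ ‖x‖ := by
  rw [← hL.isHermitian.eigenvectorBasis.repr.norm_map,
    ← hL.isHermitian.eigenvectorBasis.repr.norm_map x, EuclideanSpace.norm_eq,
    EuclideanSpace.norm_eq]
  gcongr with i
  rw [hL.isHermitian.repr_toEuclideanCLM_exp_neg_smul, norm_mul,
    Real.norm_of_nonneg (Real.exp_pos _).le]
  exact mul_le_of_le_one_left (norm_nonneg _) (hL.exp_neg_mul_eigenvalues_le_one ht i)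

theorem Matrix.PosSemidef.mulVec_eq_zero_of_norm_toEuclideanCLM_exp_neg_smul_eq
    (hL : L.PosSemidef) (ht : 0 < t) {x : EuclideanSpace ℝ ι}
    (h : ‖toEuclideanCLM (𝕜 := ℝ) (exp (-(t • L))) x‖ = ‖x‖) : L *ᵥ ofLp x = 0 := by
  set b := hL.isHermitian.eigenvectorBasis with hb
  set e : ι → ℝ := fun i => Real.exp (-(t * hL.isHermitian.eigenvalues i)) with he
  have hsq : ∑ i, (e i * b.repr x i) ^ 2 = ∑ i, b.repr x i ^ 2 := by
    have h2 := congrArg (· ^ 2) h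
    rw [← b.repr.norm_map, ← b.repr.norm_map x] at h2
    simp only [EuclideanSpace.real_norm_sq_eq] at h2
    simpa only [hb, he, hL.isHermitian.repr_toEuclideanCLM_exp_neg_smul] using h2
  have hle (i : ι) : (e i * b.repr x i) ^ 2 ≤ b.repr x i ^ 2 := by
    rw [mul_pow]
    exact mul_le_of_le_one_left (sq_nonneg _)
      (pow_le_one₀ (Real.exp_pos _).le (hL.exp_neg_mul_eigenvalues_le_one ht.le i))
  have hcoord (i : ι) : hL.isHermitian.eigenvalues i * b.repr x i = 0 := by
    have hi := (Finset.sum_eq_sum_iff_of_le fun i _ => hle i).1 hsq i (Finset.mem_univ i)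
    rcases (hL.eigenvalues_nonneg i).eq_or_lt with h0 | hpos
    · rw [← h0, zero_mul]
    have he1 : e i < 1 := Real.exp_lt_one_iff.2 (neg_neg_of_pos (mul_pos ht hpos))
    have hfactor : (1 - e i ^ 2) * b.repr x i ^ 2 = 0 := by linear_combination -hi
    have he2 : 0 < 1 - e i ^ 2 := sub_pos.2 (pow_lt_one₀ (Real.exp_pos _).le he1 two_ne_zero)
    rw [pow_eq_zero_iff two_ne_zero |>.1 ((mul_eq_zero.1 hfactor).resolve_left he2.ne'),
      mul_zero]
  have hLx : toEuclideanCLM (𝕜 := ℝ) L x = 0 := b.repr.injective <| by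
    ext i
    rw [hL.isHermitian.repr_toEuclideanCLM b hL.isHermitian.mulVec_eigenvectorBasis, hcoord,
      map_zero]
    rfl
  simpa using congrArg ofLp hLx

end PosSemidef

theorem Matrix.IsHermitian.toEuclideanCLM_mem_orthogonal {M : Matrix ι ι ℝ}
    (hM : M.IsHermitian) {R : Submodule ℝ (EuclideanSpace ℝ ι)}
    (hR : ∀ y ∈ R, toEuclideanCLM (𝕜 := ℝ) M y = y)
    {x : EuclideanSpace ℝ ι} (hx : x ∈ Rᗮ) : toEuclideanCLM (𝕜 := ℝ) M x ∈ Rᗮ := by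
  rw [Submodule.mem_orthogonal] at hx ⊢
  intro u hu
  calc inner ℝ u (toEuclideanCLM (𝕜 := ℝ) M x)
      = inner ℝ (toEuclideanCLM (𝕜 := ℝ) M u) x :=
        ((isSymmetric_toEuclideanLin_iff.mpr hM) u x).symm
    _ = 0 := by rw [hR u hu]; exact hx u hu

end Spectral

section StateSeq
variable {ι : Type*} [Fintype ι] [DecidableEq ι]

theorem toLp_stateSeq (E : ℕ → Matrix ι ι ℝ) (x0 : ι → ℝ) (k : ℕ) :
    toLp 2 (stateSeq E x0 k) =
      transition (fun j => toEuclideanCLM (𝕜 := ℝ) (E j)) k (toLp 2 x0) := by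
  induction k with
  | zero => rfl
  | succ k ih => rw [stateSeq, ← toEuclideanCLM_toLp, ih]; rfl

theorem stateSeq_add (E : ℕ → Matrix ι ι ℝ) (x y : ι → ℝ) (k : ℕ) :
    stateSeq E (x + y) k = stateSeq E x k + stateSeq E y k := by
  induction k with
  | zero => rfl
  | succ k ih => rw [stateSeq, ih, mulVec_add]; rfl

theorem stateSeq_eq_self {E : ℕ → Matrix ι ι ℝ} {x : ι → ℝ} (h : ∀ k, E k *ᵥ x = x) (k : ℕ) :
    stateSeq E x k = x := by
  induction k with
  | zero => rfl
  | succ k ih => rw [stateSeq, ih, h]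

variable {L : ℕ → Matrix ι ι ℝ} {Δt : ℕ → ℝ} {m : ℕ}

theorem tendsto_stateSeq_exp_neg_smul_nhds_zero (hm : m ≠ 0)
    (hLper : ∀ k, L k = L (k % m)) (hΔper : ∀ k, Δt k = Δt (k % m)) (hΔ : ∀ k, 0 < Δt k)
    (hpsd : ∀ k, (L k).PosSemidef) {R : Submodule ℝ (EuclideanSpace ℝ ι)}
    (hR : ∀ k, ∀ y ∈ R, L k *ᵥ ofLp y = 0)
    (hker : ∀ y, (∑ k ∈ range m, Δt k • L k) *ᵥ ofLp y = 0 → y ∈ R)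
    {x : ι → ℝ} (hx : toLp 2 x ∈ Rᗮ) :
    Tendsto (stateSeq (fun k => exp (-(Δt k • L k))) x) atTop (𝓝 0) := by
  set T := fun k => toEuclideanCLM (𝕜 := ℝ) (exp (-(Δt k • L k)))
  have hT (k : ℕ) (y : EuclideanSpace ℝ ι) : ‖T k y‖ ≤ ‖y‖ :=
    (hpsd k).norm_toEuclideanCLM_exp_neg_smul_le (hΔ k).le y
  have hnull (k : ℕ) (y : EuclideanSpace ℝ ι) (h : ‖T k y‖ = ‖y‖) : L k *ᵥ ofLp y = 0 :=
    (hpsd k).mulVec_eq_zero_of_norm_toEuclideanCLM_exp_neg_smul_eq (hΔ k) h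
  have hfix (k : ℕ) (y : EuclideanSpace ℝ ι) (h : L k *ᵥ ofLp y = 0) : T k y = y := by
    change toLp 2 (_ *ᵥ ofLp y) = y
    rw [exp_neg_smul_mulVec_of_mulVec_eq_zero _ h]
  have hW (k : ℕ) (y : EuclideanSpace ℝ ι) (hy : y ∈ Rᗮ) : T k y ∈ Rᗮ :=
    ((hpsd k).isHermitian.exp_neg_smul _).toEuclideanCLM_mem_orthogonal
      (fun u hu => hfix k u (hR k u hu)) hy
  have hP (y : EuclideanSpace ℝ ι) (hy : y ∈ Rᗮ) (hy0 : y ≠ 0) : ‖transition T m y‖ < ‖y‖ := by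
    refine (norm_transition_apply_le hT m y).lt_of_ne fun heq => hy0 ?_
    have hTy := apply_eq_self_of_norm_transition_apply_eq hT
      (fun k y h => hfix k y (hnull k y h)) heq
    have hsum : (∑ k ∈ range m, Δt k • L k) *ᵥ ofLp y = 0 := by
      rw [sum_mulVec]
      refine Finset.sum_eq_zero fun k hk => ?_
      rw [smul_mulVec, hnull k y (by rw [hTy k (mem_range.1 hk)]), smul_zero]
    exact Submodule.disjoint_def.1 (Submodule.orthogonal_disjoint R) y (hker y hsum) hy
  have hper (k : ℕ) : T k = T (k % m) := by simp only [T]; rw [hLper k, hΔper k]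
  have hlim := ((PiLp.continuous_ofLp 2 _).tendsto 0).comp
    (tendsto_transition_apply_nhds_zero hm hper hT hW hP hx)
  have hstate : stateSeq (fun k => exp (-(Δt k • L k))) x =
      fun k => ofLp (transition T k (toLp 2 x)) :=
    funext fun k => by rw [← toLp_stateSeq]
  rw [hstate]
  exact hlim

end StateSeq

section Consensus
variable {n d : ℕ}

def consensusSubspace (n d : ℕ) : Submodule ℝ (EuclideanSpace ℝ (Fin n × Fin d)) where
  carrier := {x | isConsensus (ofLp x)}
  add_mem' := by
    rintro x y ⟨v, hv⟩ ⟨w, hw⟩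
    exact ⟨v + w, fun p => by simp [hv p, hw p]⟩
  zero_mem' := ⟨0, fun p => rfl⟩
  smul_mem' := by
    rintro c x ⟨v, hv⟩
    exact ⟨c • v, fun p => by simp [hv p]⟩

noncomputable def consensusAverage (x : Fin n × Fin d → ℝ) : Fin n × Fin d → ℝ :=
  fun p => (n : ℝ)⁻¹ * ∑ i : Fin n, x (i, p.2)

theorem isConsensus_consensusAverage (x : Fin n × Fin d → ℝ) :
    isConsensus (consensusAverage x) :=
  ⟨fun q => (n : ℝ)⁻¹ * ∑ i : Fin n, x (i, q), fun _ => rfl⟩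

theorem dotProduct_sub_consensusAverage {c : Fin n × Fin d → ℝ} (hc : isConsensus c)
    (x : Fin n × Fin d → ℝ) : c ⬝ᵥ (x - consensusAverage x) = 0 := by
  obtain ⟨v, hv⟩ := hc
  rw [dotProduct, Fintype.sum_prod_type_right]
  refine Finset.sum_eq_zero fun q _ => ?_
  simp only [hv, Pi.sub_apply, consensusAverage, ← Finset.mul_sum, Finset.sum_sub_distrib,
    Finset.sum_const, card_univ, Fintype.card_fin, nsmul_eq_mul]
  rcases eq_or_ne n 0 with rfl | hn
  · simp
  · field_simp; ring

theorem toLp_sub_consensusAverage_mem_orthogonal (x : Fin n × Fin d → ℝ) :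
    toLp 2 (x - consensusAverage x) ∈ (consensusSubspace n d)ᗮ := by
  rw [Submodule.mem_orthogonal]
  intro u hu
  rw [EuclideanSpace.inner_eq_star_dotProduct, star_trivial, dotProduct_comm]
  exact dotProduct_sub_consensusAverage hu x

variable {m : ℕ} {L : ℕ → Matrix (Fin n × Fin d) (Fin n × Fin d) ℝ} {Δt : ℕ → ℝ}

theorem tendsto_stateSeq_consensusAverage (hm : m ≠ 0)
    (hLper : ∀ k, L k = L (k % m)) (hΔper : ∀ k, Δt k = Δt (k % m)) (hΔ : ∀ k, 0 < Δt k)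
    (hpsd : ∀ k, (L k).PosSemidef) (hR : ∀ k, ∀ x, isConsensus x → L k *ᵥ x = 0)
    (hker : ∀ x, (∑ k ∈ range m, Δt k • L k) *ᵥ x = 0 → isConsensus x) (x0 : Fin n × Fin d → ℝ) :
    Tendsto (stateSeq (fun k => exp (-(Δt k • L k))) x0) atTop (𝓝 (consensusAverage x0)) := by
  set E := fun k => exp (-(Δt k • L k))
  set r := consensusAverage x0
  have hw : Tendsto (stateSeq E (x0 - r)) atTop (𝓝 0) :=
    tendsto_stateSeq_exp_neg_smul_nhds_zero hm hLper hΔper hΔ hpsd (R := consensusSubspace n d)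
      (fun k y hy => hR k _ hy) (fun y hy => hker _ hy)
      (toLp_sub_consensusAverage_mem_orthogonal x0)
  have hr := stateSeq_eq_self (E := E) fun k =>
    exp_neg_smul_mulVec_of_mulVec_eq_zero _ (hR k r (isConsensus_consensusAverage x0))
  have hsplit : stateSeq E x0 = fun k => r + stateSeq E (x0 - r) k := funext fun k => by
    conv_lhs => rw [← add_sub_cancel r x0]
    rw [stateSeq_add, hr]
  rw [hsplit]
  simpa using tendsto_const_nhds.add hw

theorem isConsensus_of_mulVec_eq_zero_of_tendsto (hm : m ≠ 0) (hLper : ∀ k, L k = L (k % m))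
    (hΔ : ∀ k, 0 < Δt k) (hpsd : ∀ k, (L k).PosSemidef)
    (hconv : ∀ x0, Tendsto (stateSeq (fun k => exp (-(Δt k • L k))) x0) atTop
      (𝓝 (consensusAverage x0)))
    {x : Fin n × Fin d → ℝ} (hx : (∑ k ∈ range m, Δt k • L k) *ᵥ x = 0) : isConsensus x := by
  have hLx (k : ℕ) : L k *ᵥ x = 0 := by
    rw [hLper k]
    exact mulVec_eq_zero_of_sum_smul_posSemidef_mulVec_eq_zero (fun k _ => hpsd k)
      (fun k _ => hΔ k) hx _ (mem_range.2 (Nat.mod_lt _ (Nat.pos_of_ne_zero hm)))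
  have hconst := stateSeq_eq_self fun k => exp_neg_smul_mulVec_of_mulVec_eq_zero (Δt k) (hLx k)
  have hxavg : x = consensusAverage x :=
    tendsto_nhds_unique (by rw [funext hconst]; exact tendsto_const_nhds) (hconv x)
  exact hxavg ▸ isConsensus_consensusAverage x

end Consensus

theorem periodic_average_consensus_iff_null_integral_general
    {n d m : ℕ} (hm : 1 ≤ m)
    (L : ℕ → Matrix (Fin n × Fin d) (Fin n × Fin d) ℝ) (Δt : ℕ → ℝ)
    (hLper : ∀ k, L k = L (k % m)) (hΔper : ∀ k, Δt k = Δt (k % m))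
    (hΔ : ∀ k, 0 < Δt k)
    (hpsd : ∀ k, (L k).PosSemidef)
    (hR : ∀ k, ∀ x : Fin n × Fin d → ℝ, isConsensus x → (L k).mulVec x = 0) :
    (∀ x0 : Fin n × Fin d → ℝ,
        Tendsto (stateSeq (fun k => NormedSpace.exp (-(Δt k • L k))) x0) atTop
          (nhds (fun p => (n : ℝ)⁻¹ * ∑ i : Fin n, x0 (i, p.2))))
      ↔ (∀ x : Fin n × Fin d → ℝ,
          ((∑ k ∈ Finset.range m, Δt k • L k).mulVec x = 0 ↔ isConsensus x)) := by
  have hm0 : m ≠ 0 := Nat.one_le_iff_ne_zero.1 hm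
  constructor
  · intro hconv x
    refine ⟨isConsensus_of_mulVec_eq_zero_of_tendsto hm0 hLper hΔ hpsd hconv, fun hx => ?_⟩
    rw [sum_mulVec]
    exact Finset.sum_eq_zero fun k _ => by rw [smul_mulVec, hR k x hx, smul_zero]
  · intro hnull x0
    exact tendsto_stateSeq_consensusAverage hm0 hLper hΔper hΔ hpsd hR (fun x => (hnull x).1) x0

/-- For a periodic switched matrix-weighted network with Laplacians
`L^k = L^{k mod m}` (symmetric PSD, `R ⊆ null(L^k)`) and dwell times
`Δt k = Δt (k mod m) > 0`, average consensus is reached from every initial state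
if and only if the integral Laplacian over one period,
`∑_{k=0}^{m-1} Δt_k L^k`, has null space equal to `R`. -/
theorem periodic_average_consensus_iff_null_integral
    {n d m : ℕ} (hn : 2 ≤ n) (hd : 1 ≤ d) (hm : 1 ≤ m)
    (L : ℕ → Matrix (Fin n × Fin d) (Fin n × Fin d) ℝ) (Δt : ℕ → ℝ)
    (hLper : ∀ k, L k = L (k % m)) (hΔper : ∀ k, Δt k = Δt (k % m))
    (hΔ : ∀ k, 0 < Δt k)
    (hpsd : ∀ k, (L k).PosSemidef)
    (hR : ∀ k, ∀ x : Fin n × Fin d → ℝ, isConsensus x → (L k).mulVec x = 0) :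
    (∀ x0 : Fin n × Fin d → ℝ,
        Tendsto (stateSeq (fun k => NormedSpace.exp (-(Δt k • L k))) x0) atTop
          (nhds (fun p => (n : ℝ)⁻¹ * ∑ i : Fin n, x0 (i, p.2))))
      ↔ (∀ x : Fin n × Fin d → ℝ,
          ((∑ k ∈ Finset.range m, Δt k • L k).mulVec x = 0 ↔ isConsensus x)) :=
  periodic_average_consensus_iff_null_integral_general hm L Δt hLper hΔper hΔ hpsd hR
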